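/- arXiv:2212.03565 — 2 statements merged into one kernel-verified Lean document; each statement's English description precedes it below -/
import Mathlib

section
/- Recursive boolean isomorphism is a bisimulation with respect to theory extension: if U is recursively boolean isomorphic to V and U' is an extension of U in the same language, then there is an extension V' of V in the same language such that U' is recursively boolean isomorphic to V'; and symmetrically, if V' is an extension of V in the same language, then there is an extension U' of U in the same language such that U' is recursively boolean isomorphic to V'. -/
open FirstOrder Language

namespace Formalization

/-- An `Encodable` instance for bounded formulas, derived from Mathlib's encoding. -/
def sigmaBFEncodable (L : Language) (α : Type*) [Encodable α]
    [∀ n, Encodable (L.Functions n)] [∀ n, Encodable (L.Relations n)] :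
    Encodable (Σ n, L.BoundedFormula α n) :=
  haveI : Encodable (Σ i, L.Functions i) := Sigma.encodable
  haveI : Encodable (Σ i, L.Relations i) := Sigma.encodable
  Encodable.ofLeftInjection
    (fun φ => φ.2.listEncode)
    (fun l => (BoundedFormula.listDecode l)[0]?)
    (fun φ => BoundedFormula.encoding.decode_encode φ)

instance sentenceEncodable (L : Language)
    [∀ n, Encodable (L.Functions n)] [∀ n, Encodable (L.Relations n)] :
    Encodable L.Sentence :=
  haveI := sigmaBFEncodable L Empty
  Encodable.ofLeftInjection
    (fun φ => (⟨0, φ⟩ : Σ n, L.BoundedFormula Empty n))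
    (fun p => match p with
      | ⟨0, φ⟩ => some φ
      | ⟨_ + 1, _⟩ => none)
    (fun _ => rfl)

section TheoryNotions

variable {L : Language} [∀ n, Encodable (L.Functions n)] [∀ n, Encodable (L.Relations n)]

/-- The set of Gödel codes of theorems of a theory. -/
def TheoremSet (T : L.Theory) : Set ℕ :=
  {n | ∃ φ : L.Sentence, Encodable.encode φ = n ∧ T ⊨ᵇ φ}

/-- The set of Gödel codes of sentences refuted by a theory. -/
def RefutableSet (T : L.Theory) : Set ℕ :=
  {n | ∃ φ : L.Sentence, Encodable.encode φ = n ∧ T ⊨ᵇ ∼φ}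

/-- A theory is recursively enumerable if its set of theorem-codes is r.e. -/
def IsRE (T : L.Theory) : Prop := REPred (· ∈ TheoremSet T)

/-- A theory is decidable if its set of theorem-codes is computable. -/
def IsDecidableTheory (T : L.Theory) : Prop := ComputablePred (· ∈ TheoremSet T)

/-- A theory is consistent if it does not prove `⊥`. -/
def Consistent (T : L.Theory) : Prop := ¬ T ⊨ᵇ (⊥ : L.Sentence)

/-- `Extends T T'` : `T'` is an extension of `T` in the same language,
i.e. every theorem of `T` is a theorem of `T'`. -/
def Extends (T T' : L.Theory) : Prop := ∀ φ : L.Sentence, T ⊨ᵇ φ → T' ⊨ᵇ φ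

/-- A theory is complete if it decides every sentence. -/
def IsCompleteTheory (T : L.Theory) : Prop := ∀ φ : L.Sentence, T ⊨ᵇ φ ∨ T ⊨ᵇ ∼φ

/-- Hereditarily undecidable: every consistent r.e. sub-theory (in the same language)
is undecidable. -/
def HeredUndecidable (T : L.Theory) : Prop :=
  ∀ W : L.Theory, IsRE W → Consistent W → Extends W T → ¬ IsDecidableTheory W

/-- Essentially undecidable: every consistent r.e. extension (in the same language)
is undecidable. -/
def EssUndecidable (T : L.Theory) : Prop :=
  ∀ W : L.Theory, IsRE W → Consistent W → Extends T W → ¬ IsDecidableTheory W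

/-- Essentially hereditarily undecidable: every consistent r.e. extension (in the same
language) is hereditarily undecidable. -/
def EssHeredUndecidable (T : L.Theory) : Prop :=
  ∀ W : L.Theory, IsRE W → Consistent W → Extends T W → HeredUndecidable W

end TheoryNotions

end Formalization

namespace Formalization

section Iso

variable {L L' : Language}
  [∀ n, Encodable (L.Functions n)] [∀ n, Encodable (L.Relations n)]
  [∀ n, Encodable (L'.Functions n)] [∀ n, Encodable (L'.Relations n)]

/-- A recursive boolean isomorphism between the theories `U` and `V`:
a computable bijection between the sentences that commutes with the boolean
connectives and preserves provability in both directions. -/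
structure RecBoolIso (U : L.Theory) (V : L'.Theory) : Type _ where
  toFun : L.Sentence → L'.Sentence
  bijective : Function.Bijective toFun
  computable : ∃ f : ℕ → ℕ, Computable f ∧
    ∀ φ : L.Sentence, f (Encodable.encode φ) = Encodable.encode (toFun φ)
  map_bot : toFun ⊥ = ⊥
  map_top : toFun ⊤ = ⊤
  map_not : ∀ φ, toFun (∼φ) = ∼(toFun φ)
  map_imp : ∀ φ ψ, toFun (φ ⟹ ψ) = toFun φ ⟹ toFun ψ
  map_inf : ∀ φ ψ, toFun (φ ⊓ ψ) = toFun φ ⊓ toFun ψ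
  map_sup : ∀ φ ψ, toFun (φ ⊔ ψ) = toFun φ ⊔ toFun ψ
  provable_iff : ∀ φ, U ⊨ᵇ φ ↔ V ⊨ᵇ toFun φ

end Iso

end Formalization

/-!
Given `Φ : RecBoolIso U V`, take `V ∪ Φ[U']` as the partner of `U'` and `U ∪ Φ⁻¹[V']` as the
partner of `V'`. By compactness, `U ∪ S ⊨ φ` iff `U ⊨ ψ₁ ⟹ … ⟹ ψₙ ⟹ φ` for some `ψᵢ ∈ S`;
as `Φ` commutes with `⟹` and transfers provability from `U` to `V`, this is equivalent to
`V ∪ Φ[S] ⊨ Φ φ`. An extension absorbs the theory it extends, and `Φ[Φ⁻¹[V']] = V'` by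
surjectivity.
-/

theorem List.exists_map_eq_of_forall_mem_image {α β : Type*} {f : α → β} {s : Set α}
    {l : List β} (h : ∀ x ∈ l, x ∈ f '' s) : ∃ l₀ : List α, (∀ x ∈ l₀, x ∈ s) ∧ l₀.map f = l := by
  have hl : l ∈ Set.range (List.map (f ∘ Subtype.val : s → β)) := by
    rw [Set.range_list_map]
    intro x hx
    obtain ⟨a, ha, rfl⟩ := h x hx
    exact ⟨⟨a, ha⟩, rfl⟩
  obtain ⟨l₁, rfl⟩ := hl
  refine ⟨l₁.map Subtype.val, fun x hx => ?_, by simp⟩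
  obtain ⟨a, -, rfl⟩ := List.mem_map.1 hx
  exact a.2

namespace Formalization

variable {L L' : Language}

theorem realize_foldr_imp {M : Type*} [L.Structure M] (l : List L.Sentence) (φ : L.Sentence) :
    M ⊨ l.foldr (· ⟹ ·) φ ↔ ((∀ ψ ∈ l, M ⊨ ψ) → M ⊨ φ) := by
  simp only [Sentence.Realize, Formula.Realize]
  exact Iff.of_eq (BoundedFormula.realize_foldr_imp l φ default default)

theorem models_union_iff_exists_foldr_imp {T S : L.Theory} {φ : L.Sentence} :
    T ∪ S ⊨ᵇ φ ↔ ∃ l : List L.Sentence, (∀ ψ ∈ l, ψ ∈ S) ∧ T ⊨ᵇ l.foldr (· ⟹ ·) φ := by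
  constructor
  · intro h
    classical
    obtain ⟨T₀, hT₀, hφ⟩ := Theory.models_iff_finset_models.1 h
    obtain ⟨s₁, s₂, rfl, hs₁, hs₂⟩ := Finset.subset_union_elim hT₀
    refine ⟨s₂.toList, fun ψ hψ => (hs₂ (Finset.mem_toList.1 hψ)).1, ?_⟩
    refine Theory.models_sentence_iff.2 fun M => (realize_foldr_imp _ _).2 fun hs₂M => ?_
    have : M ⊨ ((s₁ ∪ s₂ : Finset L.Sentence) : L.Theory) := by
      refine (Theory.model_iff _).2 fun ψ hψ => ?_
      rcases Finset.mem_union.1 hψ with hψ | hψ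
      · exact Theory.realize_sentence_of_mem T (hs₁ hψ)
      · exact hs₂M ψ (Finset.mem_toList.2 hψ)
    exact hφ.realize_sentence M
  · rintro ⟨l, hl, hT⟩
    refine Theory.models_sentence_iff.2 fun M => ?_
    have : M ⊨ T := M.is_model.mono Set.subset_union_left
    exact (realize_foldr_imp l φ).1 (hT.realize_sentence M) fun ψ hψ =>
      Theory.realize_sentence_of_mem (T ∪ S) (Or.inr (hl ψ hψ))

theorem models_union_iff_models_union_image {Φ : L.Sentence → L'.Sentence}
    (map_imp : ∀ φ ψ, Φ (φ ⟹ ψ) = Φ φ ⟹ Φ ψ) {U : L.Theory} {V : L'.Theory}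
    (provable_iff : ∀ φ, U ⊨ᵇ φ ↔ V ⊨ᵇ Φ φ) (S : L.Theory) (φ : L.Sentence) :
    U ∪ S ⊨ᵇ φ ↔ V ∪ Φ '' S ⊨ᵇ Φ φ := by
  have map_foldr_imp : ∀ l : List L.Sentence,
      Φ (l.foldr (· ⟹ ·) φ) = (l.map Φ).foldr (· ⟹ ·) (Φ φ) := by
    intro l
    induction l with
    | nil => rfl
    | cons ψ l ih => simp only [List.foldr_cons, List.map_cons, map_imp, ih]
  simp only [models_union_iff_exists_foldr_imp, provable_iff, map_foldr_imp]
  constructor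
  · rintro ⟨l, hl, h⟩
    exact ⟨l.map Φ, List.forall_mem_map.2 fun ψ hψ => Set.mem_image_of_mem Φ (hl ψ hψ), h⟩
  · rintro ⟨l', hl', h⟩
    obtain ⟨l, hl, rfl⟩ := List.exists_map_eq_of_forall_mem_image hl'
    exact ⟨l, hl, h⟩

theorem extends_of_subset {T T' : L.Theory} (h : T ⊆ T') : Extends T T' := fun _ =>
  Theory.models_of_models_theory fun _ hψ => Theory.models_sentence_of_mem (h hψ)

theorem models_union_iff_of_extends {T T' : L.Theory} (h : Extends T T') {φ : L.Sentence} :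
    T ∪ T' ⊨ᵇ φ ↔ T' ⊨ᵇ φ :=
  ⟨Theory.models_of_models_theory fun ψ hψ =>
      hψ.elim (fun hT => h ψ (Theory.models_sentence_of_mem hT)) Theory.models_sentence_of_mem,
    extends_of_subset Set.subset_union_right φ⟩

namespace RecBoolIso

variable [∀ n, Encodable (L.Functions n)] [∀ n, Encodable (L.Relations n)]
  [∀ n, Encodable (L'.Functions n)] [∀ n, Encodable (L'.Relations n)]
  {U : L.Theory} {V : L'.Theory}

theorem exists_of_extends_left (Φ : RecBoolIso U V) {U' : L.Theory} (hU : Extends U U') :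
    ∃ V' : L'.Theory, Extends V V' ∧ Nonempty (RecBoolIso U' V') :=
  ⟨V ∪ Φ.toFun '' U', extends_of_subset Set.subset_union_left,
    ⟨{ Φ with
      provable_iff := fun φ => by
        rw [← models_union_iff_models_union_image Φ.map_imp Φ.provable_iff,
          models_union_iff_of_extends hU] }⟩⟩

theorem exists_of_extends_right (Φ : RecBoolIso U V) {V' : L'.Theory} (hV : Extends V V') :
    ∃ U' : L.Theory, Extends U U' ∧ Nonempty (RecBoolIso U' V') :=
  ⟨U ∪ Φ.toFun ⁻¹' V', extends_of_subset Set.subset_union_left,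
    ⟨{ Φ with
      provable_iff := fun φ => by
        rw [models_union_iff_models_union_image Φ.map_imp Φ.provable_iff,
          Set.image_preimage_eq _ Φ.bijective.2, models_union_iff_of_extends hV] }⟩⟩

end RecBoolIso

/-- Recursive boolean isomorphism is a bisimulation with respect to theory
extension: the zig and the zag conditions. -/
theorem statement_2 {L L' : Language}
    [∀ n, Encodable (L.Functions n)] [∀ n, Encodable (L.Relations n)]
    [∀ n, Encodable (L'.Functions n)] [∀ n, Encodable (L'.Relations n)]
    (U : L.Theory) (V : L'.Theory) (h : Nonempty (RecBoolIso U V)) :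
    (∀ U' : L.Theory, Extends U U' →
      ∃ V' : L'.Theory, Extends V V' ∧ Nonempty (RecBoolIso U' V')) ∧
    (∀ V' : L'.Theory, Extends V V' →
      ∃ U' : L.Theory, Extends U U' ∧ Nonempty (RecBoolIso U' V')) := by
  obtain ⟨Φ⟩ := h
  exact ⟨fun _ hU => Φ.exists_of_extends_left hU, fun _ hV => Φ.exists_of_extends_right hV⟩

end Formalization
end

section
/- Let U be a consistent RE theory and let U₀ be a finitely axiomatized sub-theory of U in the same language. Suppose Φ is a computable function from the natural numbers to the sentences of U, and X, Y is a pair of recursively inseparable sets of natural numbers. Suppose Φ maps every element of X to a theorem of U₀ and every element of Y to a sentence refuted by U. Then U is essentially hereditarily undecidable. -/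
open FirstOrder Language

namespace Formalization

/-- Disjoint sets `X`, `Y` of naturals are recursively inseparable if there is no
computable set containing `X` and disjoint from `Y`. -/
def RecInseparable (X Y : Set ℕ) : Prop :=
  ¬ ∃ C : Set ℕ, ComputablePred (· ∈ C) ∧ X ⊆ C ∧ ∀ y ∈ Y, y ∉ C

/-! Hanf's argument. Let `A` be the conjunction of the finitely many axioms of `U₀`. If a
consistent extension `W` of `U` had a decidable consistent subtheory `V`, then
`{n | V ⊨ A → Φ n}` would be a computable set. It contains `X`, since `A → Φ n` is valid for
`n ∈ X`, and it misses `Y`, since for `n ∈ Y` the theory `W` proves `A` and `¬ Φ n`. This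
contradicts the recursive inseparability of `X` and `Y`. The finiteness of `U₀` is what makes
`A` a sentence, so that `φ ↦ A → φ` is a computable operation on codes. -/

open Encodable

theorem encode_list_eq_encode_map_encode {γ : Type*} [Encodable γ] (l : List γ) :
    encode l = encode (l.map encode) := by
  induction l with
  | nil => rfl
  | cons a l ih => simp [encode_list_cons, ih]

def ComputableOnCodes {α β : Type*} [Encodable α] [Encodable β] (g : α → β) : Prop :=
  ∃ e : ℕ → ℕ, Computable e ∧ ∀ a, e (encode a) = encode (g a)

theorem ComputableOnCodes.comp {α β γ : Type*} [Encodable α] [Encodable β] [Encodable γ]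
    {g : β → γ} {h : α → β} (hg : ComputableOnCodes g) (hh : ComputableOnCodes h) :
    ComputableOnCodes (g ∘ h) := by
  obtain ⟨e, he, hge⟩ := hg
  obtain ⟨e', he', hhe'⟩ := hh
  exact ⟨e ∘ e', he.comp he', fun a => by simp only [Function.comp_apply, hhe', hge]⟩

section Semantics

variable {L : Language}

noncomputable def conjunction (s : Finset L.Sentence) : L.Sentence :=
  BoundedFormula.iInf fun ψ : s => (ψ : L.Sentence)

theorem realize_conjunction {M : Type*} [L.Structure M] (s : Finset L.Sentence) :
    M ⊨ conjunction s ↔ ∀ ψ ∈ s, M ⊨ ψ := by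
  simp [conjunction, Sentence.Realize, Formula.Realize]

theorem models_conjunction_imp_of_models {s : Finset L.Sentence} {φ : L.Sentence}
    (h : (↑s : L.Theory) ⊨ᵇ φ) (T : L.Theory) : T ⊨ᵇ (conjunction s).imp φ := by
  rw [Theory.models_sentence_iff]
  intro M
  refine (Sentence.realize_imp M).mpr fun hs => ?_
  have : M ⊨ (↑s : L.Theory) := (Theory.model_iff _).mpr ((realize_conjunction s).mp hs)
  exact h.realize_sentence M

theorem models_of_models_conjunction_imp {T : L.Theory} {s : Finset L.Sentence}
    {φ : L.Sentence} (h : T ⊨ᵇ (conjunction s).imp φ) (hs : ∀ ψ ∈ s, T ⊨ᵇ ψ) : T ⊨ᵇ φ := by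
  rw [Theory.models_sentence_iff] at h ⊢
  intro M
  exact (Sentence.realize_imp M).mp (h M) ((realize_conjunction s).mpr fun ψ hψ =>
    (hs ψ hψ).realize_sentence M)

theorem Consistent.not_models_not_of_models {T : L.Theory} (hT : Consistent T)
    {φ : L.Sentence} (h : T ⊨ᵇ φ) : ¬ T ⊨ᵇ ∼φ := by
  intro hnot
  refine hT (Theory.models_sentence_iff.mpr fun M => ?_)
  exact hnot.realize_sentence M (h.realize_sentence M)

end Semantics

section Coding

variable {L : Language} [∀ n, Encodable (L.Functions n)] [∀ n, Encodable (L.Relations n)]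

/-- The code of `ψ.imp φ` is that of the list `tag :: ψ.listEncode ++ φ.listEncode`, so it is
obtained from the code of `φ` by prepending a list of numbers that depends only on `ψ`. -/
theorem computableOnCodes_imp (ψ : L.Sentence) :
    ComputableOnCodes (ψ.imp : L.Sentence → L.Sentence) := by
  let prefix_ : List ℕ :=
    ((Sum.inr (Sum.inr 0) :: ψ.listEncode :
        List ((Σ k, L.Term (Empty ⊕ Fin k)) ⊕ ((Σ n, L.Relations n) ⊕ ℕ))).map encode)
  refine ⟨fun m => encode (prefix_ ++ Denumerable.ofNat (List ℕ) m), ?_, fun φ => ?_⟩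
  · exact (Primrec.encode.comp
      (Primrec.list_append.comp (Primrec.const prefix_) (Primrec.ofNat _))).to_comp
  · change encode (prefix_ ++ Denumerable.ofNat (List ℕ) (encode φ.listEncode)) =
      encode (ψ.imp φ).listEncode
    rw [encode_list_eq_encode_map_encode φ.listEncode, Denumerable.ofNat_encode,
      encode_list_eq_encode_map_encode (ψ.imp φ).listEncode]
    simp [prefix_, BoundedFormula.listEncode]

theorem encode_mem_theoremSet {T : L.Theory} {φ : L.Sentence} :
    encode φ ∈ TheoremSet T ↔ T ⊨ᵇ φ :=
  ⟨fun ⟨_, hcode, hψ⟩ => encode_injective hcode ▸ hψ, fun h => ⟨φ, rfl, h⟩⟩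

theorem IsDecidableTheory.computablePred_models {T : L.Theory} (hT : IsDecidableTheory T)
    {g : ℕ → L.Sentence} (hg : ComputableOnCodes g) : ComputablePred fun n => T ⊨ᵇ g n := by
  obtain ⟨e, he, hcode⟩ := hg
  refine (ComputablePred.computable_of_manyOneReducible (ManyOneReducible.mk _ he) hT).of_eq
    fun n => ?_
  rw [← encode_mem_theoremSet, ← hcode]
  rfl

theorem heredUndecidable_of_recInseparable {W : L.Theory} (hW : Consistent W)
    (A : Finset L.Sentence) (hWA : ∀ ψ ∈ A, W ⊨ᵇ ψ) {Φ : ℕ → L.Sentence}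
    (hΦ : ComputableOnCodes Φ) {X Y : Set ℕ} (hinsep : RecInseparable X Y)
    (hX : ∀ n ∈ X, (↑A : L.Theory) ⊨ᵇ Φ n) (hY : ∀ n ∈ Y, W ⊨ᵇ ∼(Φ n)) :
    HeredUndecidable W := by
  intro V _ _ hVW hV
  refine hinsep ⟨{n | V ⊨ᵇ (conjunction A).imp (Φ n)}, ?_, ?_, ?_⟩
  · exact hV.computablePred_models ((computableOnCodes_imp _).comp hΦ)
  · exact fun n hn => models_conjunction_imp_of_models (hX n hn) V
  · intro n hn hV
    exact hW.not_models_not_of_models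
      (models_of_models_conjunction_imp (hVW _ hV) hWA) (hY n hn)

end Coding

theorem statement_9_general {L : Language} [∀ n, Encodable (L.Functions n)]
    [∀ n, Encodable (L.Relations n)] (U : L.Theory)
    (U₀ : Finset L.Sentence) (hsub : Extends (↑U₀ : L.Theory) U)
    (Φ : ℕ → L.Sentence)
    (hΦ : ∃ f : ℕ → ℕ, Computable f ∧ ∀ n, f n = Encodable.encode (Φ n))
    (X Y : Set ℕ) (hinsep : RecInseparable X Y)
    (hX : ∀ n ∈ X, (↑U₀ : L.Theory) ⊨ᵇ Φ n) (hY : ∀ n ∈ Y, U ⊨ᵇ ∼(Φ n)) :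
    EssHeredUndecidable U := by
  intro W _ hW hUW
  have hWU₀ : ∀ ψ ∈ U₀, W ⊨ᵇ ψ := fun ψ hψ =>
    hUW ψ (hsub ψ (Theory.models_sentence_of_mem (Finset.mem_coe.mpr hψ)))
  -- `encode` is the identity on `ℕ`, so `hΦ` is literally `ComputableOnCodes Φ`.
  exact heredUndecidable_of_recInseparable hW U₀ hWU₀ hΦ hinsep hX fun n hn => hUW _ (hY n hn)

/-- Hanf's lemma: let `U` be a consistent r.e. theory, `U₀` a finitely
axiomatized sub-theory of `U`, and let a computable `Φ` map a pair of recursively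
inseparable sets into the theorems of `U₀`, respectively the sentences refuted by `U`.
Then `U` is essentially hereditarily undecidable. -/
theorem statement_9 {L : Language} [∀ n, Encodable (L.Functions n)]
    [∀ n, Encodable (L.Relations n)] (U : L.Theory) (hre : IsRE U) (hcon : Consistent U)
    (U₀ : Finset L.Sentence) (hsub : Extends (↑U₀ : L.Theory) U)
    (Φ : ℕ → L.Sentence)
    (hΦ : ∃ f : ℕ → ℕ, Computable f ∧ ∀ n, f n = Encodable.encode (Φ n))
    (X Y : Set ℕ) (hdisj : Disjoint X Y) (hinsep : RecInseparable X Y)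
    (hX : ∀ n ∈ X, (↑U₀ : L.Theory) ⊨ᵇ Φ n) (hY : ∀ n ∈ Y, U ⊨ᵇ ∼(Φ n)) :
    EssHeredUndecidable U :=
  statement_9_general U U₀ hsub Φ hΦ X Y hinsep hX hY

end Formalization
end
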